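/- arXiv:1312.1704 — 3 statements merged into one kernel-verified Lean document; each statement's English description precedes it below -/
import Mathlib

section
/- If all bonding maps of an inverse system of continua are monotone surjections, then the projections from the inverse limit are monotone. -/
/-!
Fix `i` and `a : X i`. For `j ≥ i` let `C j` be the set of points whose coordinates below `j`
are the images of one point `b` of the fibre `(f i j)⁻¹ a`, all other coordinates being arbitrary.
Each `C j` is a continuous image of the fibre times the whole product, hence a continuum; the
sets `C j` decrease as `j` grows, and their intersection is the fibre of the projection. A
directed intersection of continua is a continuum.
-/

open Set

theorem IsConnected.iInter_of_directed_of_isCompact {α J : Type*} [TopologicalSpace α]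
    [T2Space α] [Nonempty J] {K : J → Set α} (hd : Directed (· ⊇ ·) K)
    (hK : ∀ j, IsConnected (K j)) (hc : ∀ j, IsCompact (K j)) :
    IsConnected (⋂ j, K j) := by
  have hcl : ∀ j, IsClosed (K j) := fun j => (hc j).isClosed
  refine ⟨IsCompact.nonempty_iInter_of_directed_nonempty_isCompact_isClosed K hd
    (fun j => (hK j).nonempty) hc hcl, ?_⟩
  rw [isPreconnected_iff_subset_of_fully_disjoint_closed (isClosed_iInter hcl)]
  intro u v hu hv hsub huv
  set S := ⋂ j, K j
  have hS : IsCompact S := (hc (Classical.arbitrary J)).of_isClosed_subset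
    (isClosed_iInter hcl) (iInter_subset _ _)
  obtain ⟨U, V, hU, hV, hSU, hSV, hUV⟩ := SeparatedNhds.of_isCompact_isCompact
    (hS.inter_right hu) (hS.inter_right hv) (huv.mono inter_subset_right inter_subset_right)
  have hSUV : ∀ x ∈ S, x ∈ U ∪ V := fun x hx =>
    (hsub hx).imp (fun h => hSU ⟨hx, h⟩) (fun h => hSV ⟨hx, h⟩)
  -- some `K j` already lies in `U ∪ V`, and being connected it lies in `U` or in `V`
  obtain ⟨j, hj⟩ := exists_subset_nhds_of_isCompact hd hc
    fun x hx => (hU.union hV).mem_nhds (hSUV x hx)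
  have hSj : S ⊆ K j := iInter_subset _ j
  rcases (hK j).isPreconnected.subset_or_subset hU hV hUV hj with hjU | hjV
  · exact Or.inl fun x hx => (hsub hx).resolve_right fun hxv =>
      hUV.notMem_of_mem_left (hjU (hSj hx)) (hSV ⟨hx, hxv⟩)
  · exact Or.inr fun x hx => (hsub hx).resolve_left fun hxu =>
      hUV.notMem_of_mem_right (hjV (hSj hx)) (hSU ⟨hx, hxu⟩)

section InverseSystem

variable {ι : Type*} [Preorder ι] {X : ι → Type*} (f : ∀ i j : ι, i ≤ j → X j → X i)

open scoped Classical in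
noncomputable def extendBelow (j : ι) (b : X j) (y : ∀ k, X k) : ∀ k, X k :=
  fun k => if h : k ≤ j then f k j h b else y k

theorem extendBelow_of_le {j k : ι} (h : k ≤ j) (b : X j) (y : ∀ k, X k) :
    extendBelow f j b y k = f k j h b :=
  dif_pos h

theorem extendBelow_of_not_le {j k : ι} (h : ¬k ≤ j) (b : X j) (y : ∀ k, X k) :
    extendBelow f j b y k = y k :=
  dif_neg h

def extendBelowSet (j : ι) (F : Set (X j)) : Set (∀ k, X k) :=
  (fun p : X j × (∀ k, X k) => extendBelow f j p.1 p.2) '' (F ×ˢ univ)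

variable {f}

section Topology

variable [∀ i, TopologicalSpace (X i)]

theorem continuous_extendBelow (hcont : ∀ i j (h : i ≤ j), Continuous (f i j h)) (j : ι) :
    Continuous fun p : X j × (∀ k, X k) => extendBelow f j p.1 p.2 := by
  refine continuous_pi fun k => ?_
  by_cases h : k ≤ j
  · simp only [extendBelow_of_le f h]
    exact (hcont k j h).comp continuous_fst
  · simp only [extendBelow_of_not_le f h]
    exact (continuous_apply k).comp continuous_snd

theorem IsConnected.extendBelowSet [∀ k, ConnectedSpace (X k)]
    (hcont : ∀ i j (h : i ≤ j), Continuous (f i j h)) {j : ι} {F : Set (X j)}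
    (hF : IsConnected F) : IsConnected (extendBelowSet f j F) :=
  (hF.prod isConnected_univ).image _ (continuous_extendBelow hcont j).continuousOn

theorem IsCompact.extendBelowSet [∀ k, CompactSpace (X k)]
    (hcont : ∀ i j (h : i ≤ j), Continuous (f i j h)) {j : ι} {F : Set (X j)}
    (hF : IsCompact F) : IsCompact (extendBelowSet f j F) :=
  (hF.prod isCompact_univ).image (continuous_extendBelow hcont j)

end Topology

variable (hcomp : ∀ (i j k : ι) (hij : i ≤ j) (hjk : j ≤ k),
  f i k (hij.trans hjk) = f i j hij ∘ f j k hjk)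
include hcomp

theorem bonding_comp_apply {i j k : ι} (hij : i ≤ j) (hjk : j ≤ k) (b : X k) :
    f i j hij (f j k hjk b) = f i k (hij.trans hjk) b :=
  (congrFun (hcomp i j k hij hjk) b).symm

theorem extendBelow_extendBelow {j k : ι} (hjk : j ≤ k) (b : X k) (y : ∀ l, X l) :
    extendBelow f j (f j k hjk b) (extendBelow f k b y) = extendBelow f k b y := by
  funext l
  by_cases hlj : l ≤ j
  · rw [extendBelow_of_le f hlj, extendBelow_of_le f (hlj.trans hjk), bonding_comp_apply hcomp]
  · rw [extendBelow_of_not_le f hlj]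

theorem extendBelowSet_preimage_antitone {i j k : ι} (hij : i ≤ j) (hjk : j ≤ k) (a : X i) :
    extendBelowSet f k (f i k (hij.trans hjk) ⁻¹' {a}) ⊆
      extendBelowSet f j (f i j hij ⁻¹' {a}) := by
  rintro _ ⟨⟨b, y⟩, ⟨hb, -⟩, rfl⟩
  refine ⟨⟨f j k hjk b, extendBelow f k b y⟩, ⟨?_, mem_univ _⟩,
    extendBelow_extendBelow hcomp hjk b y⟩
  rwa [mem_preimage, bonding_comp_apply hcomp]

theorem directed_extendBelowSet_preimage [IsDirected ι (· ≤ ·)] (i : ι) (a : X i) :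
    Directed (· ⊇ ·) fun j : {j // i ≤ j} => extendBelowSet f j.1 (f i j.1 j.2 ⁻¹' {a}) := by
  intro j k
  obtain ⟨m, hjm, hkm⟩ := directed_of (· ≤ ·) j.1 k.1
  exact ⟨⟨m, j.2.trans hjm⟩, extendBelowSet_preimage_antitone hcomp j.2 hjm a,
    extendBelowSet_preimage_antitone hcomp k.2 hkm a⟩

theorem setOf_thread_eq_iInter [IsDirected ι (· ≤ ·)] (i : ι) (a : X i) :
    {x : ∀ j, X j | (∀ (j k : ι) (h : j ≤ k), x j = f j k h (x k)) ∧ x i = a} =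
      ⋂ j : {j // i ≤ j}, extendBelowSet f j.1 (f i j.1 j.2 ⁻¹' {a}) := by
  ext x
  simp only [mem_iInter, Subtype.forall]
  constructor
  · rintro ⟨hx, rfl⟩ j hij
    refine ⟨⟨x j, x⟩, ⟨(hx i j hij).symm, mem_univ _⟩, funext fun k => ?_⟩
    by_cases hkj : k ≤ j
    · exact (extendBelow_of_le f hkj _ _).trans (hx k j hkj).symm
    · exact extendBelow_of_not_le f hkj _ _
  · intro hx
    have hxm : ∀ m (him : i ≤ m), ∃ b : X m, f i m him b = a ∧
        ∀ k (h : k ≤ m), x k = f k m h b := by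
      intro m him
      obtain ⟨⟨b, y⟩, ⟨hb, -⟩, rfl⟩ := hx m him
      exact ⟨b, hb, fun k h => extendBelow_of_le f h b y⟩
    refine ⟨fun j k hjk => ?_, ?_⟩
    · obtain ⟨m, hkm, him⟩ := directed_of (· ≤ ·) k i
      obtain ⟨b, -, hb⟩ := hxm m him
      rw [hb j (hjk.trans hkm), hb k hkm, bonding_comp_apply hcomp]
    · obtain ⟨b, hba, hb⟩ := hxm i le_rfl
      rw [hb i le_rfl, hba]

end InverseSystem

theorem stmt10_general (ι : Type*) [Preorder ι] [IsDirected ι (· ≤ ·)]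
    (X : ι → Type*) [∀ i, TopologicalSpace (X i)] [∀ i, T2Space (X i)]
    [∀ i, CompactSpace (X i)] [∀ i, ConnectedSpace (X i)]
    (f : ∀ i j : ι, i ≤ j → X j → X i)
    (hcont : ∀ (i j : ι) (h : i ≤ j), Continuous (f i j h))
    (hcomp : ∀ (i j k : ι) (hij : i ≤ j) (hjk : j ≤ k),
      f i k (hij.trans hjk) = f i j hij ∘ f j k hjk)
    (hmono : ∀ (i j : ι) (h : i ≤ j) (a : X i), IsConnected (f i j h ⁻¹' {a})) :
    ∀ (i : ι) (a : X i),
      IsConnected {x : ∀ j, X j |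
        (∀ (j k : ι) (h : j ≤ k), x j = f j k h (x k)) ∧ x i = a} := by
  intro i a
  have : Nonempty {j // i ≤ j} := ⟨⟨i, le_rfl⟩⟩
  rw [setOf_thread_eq_iInter hcomp]
  exact IsConnected.iInter_of_directed_of_isCompact
    (directed_extendBelowSet_preimage hcomp i a)
    (fun j => (hmono i j.1 j.2 a).extendBelowSet hcont)
    (fun j => ((isClosed_singleton.preimage (hcont i j.1 j.2)).isCompact).extendBelowSet hcont)

/-- If all bonding maps of an inverse system of continua are monotone surjections,
then the projections from the inverse limit are monotone: each fiber of a
projection is connected. -/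
theorem stmt10 (ι : Type*) [Preorder ι] [IsDirected ι (· ≤ ·)] [Nonempty ι]
    (X : ι → Type*) [∀ i, TopologicalSpace (X i)] [∀ i, T2Space (X i)]
    [∀ i, CompactSpace (X i)] [∀ i, Nonempty (X i)] [∀ i, ConnectedSpace (X i)]
    (f : ∀ i j : ι, i ≤ j → X j → X i)
    (hcont : ∀ (i j : ι) (h : i ≤ j), Continuous (f i j h))
    (hid : ∀ i : ι, f i i le_rfl = id)
    (hcomp : ∀ (i j k : ι) (hij : i ≤ j) (hjk : j ≤ k),
      f i k (hij.trans hjk) = f i j hij ∘ f j k hjk)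
    (hsurj : ∀ (i j : ι) (h : i ≤ j), Function.Surjective (f i j h))
    (hmono : ∀ (i j : ι) (h : i ≤ j) (a : X i), IsConnected (f i j h ⁻¹' {a})) :
    ∀ (i : ι) (a : X i),
      IsConnected {x : ∀ j, X j |
        (∀ (j k : ι) (h : j ≤ k), x j = f j k h (x k)) ∧ x i = a} :=
  stmt10_general ι X f hcont hcomp hmono
end

section
/- A continuous surjection from a compact metric space onto a hereditarily indecomposable continuum is confluent. -/
/-!
Let `Q` be the component of `x` in `F = f⁻¹(A)` and suppose `f p ∈ A \ f(Q)`. Since `Q` is an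
intersection of relatively clopen subsets of `F`, there is an open `U ⊇ Q` with
`closure U ∩ F ⊆ U` and `closure U ∩ F` missing the fibre of `f p`; in particular `p ∉ closure U`.
By boundary bumping, the component `C` of `x` in `closure U` leaves `U`. The subcontinua `f(C)`
and `A` of `Y` meet at `f x`, so one contains the other. If `f(C) ⊆ A`, then
`C ⊆ closure U ∩ F ⊆ U`, which is false; if `A ⊆ f(C)`, then `f p` is the image of a point of
`closure U ∩ F`, which is also false.
-/

/-- A space is hereditarily indecomposable if no subcontinuum of it is the union of
two proper subcontinua. -/
def HerIndec (Y : Type*) [TopologicalSpace Y] : Prop :=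
  ∀ A : Set Y, IsCompact A → IsConnected A →
    ¬ ∃ B C : Set Y, IsCompact B ∧ IsConnected B ∧ IsCompact C ∧ IsConnected C ∧
        B ∪ C = A ∧ B ≠ A ∧ C ≠ A

open Set

section Components

variable {X : Type*} [TopologicalSpace X]

theorem IsClosed.connectedComponentIn {F : Set X} (hF : IsClosed F) (x : X) :
    IsClosed (connectedComponentIn F x) := by
  by_cases hx : x ∈ F
  · rw [connectedComponentIn_eq_image hx]
    exact hF.isClosedEmbedding_subtypeVal.isClosedMap _ isClosed_connectedComponent
  · rw [connectedComponentIn_eq_empty hx]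
    exact isClosed_empty

theorem exists_isClopen_disjoint_of_disjoint_connectedComponent [CompactSpace X] [T2Space X]
    {K : Set X} (hK : IsClosed K) {x : X} (hd : Disjoint K (connectedComponent x)) :
    ∃ Z, IsClopen Z ∧ x ∈ Z ∧ Disjoint K Z := by
  rw [connectedComponent_eq_iInter_isClopen, disjoint_iff_inter_eq_empty] at hd
  obtain ⟨u, hu⟩ := hK.isCompact.elim_finite_subfamily_closed
    (fun s : { s : Set X // IsClopen s ∧ x ∈ s } => (s : Set X)) (fun s => s.2.1.1) hd
  exact ⟨⋂ i ∈ u, (i : Set X), isClopen_biInter_finset fun i _ => i.2.1,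
    mem_iInter₂.mpr fun i _ => i.2.2, disjoint_iff_inter_eq_empty.mpr hu⟩

variable [T2Space X] {F K : Set X} {x : X}

theorem IsCompact.exists_relClopen_connectedComponentIn_subset (hF : IsCompact F)
    (hK : IsClosed K) (hx : x ∈ F) (hd : Disjoint K (connectedComponentIn F x)) :
    ∃ V ⊆ F, IsCompact V ∧ IsCompact (F \ V) ∧ connectedComponentIn F x ⊆ V ∧ Disjoint K V := by
  have : CompactSpace F := isCompact_iff_compactSpace.mp hF
  rw [connectedComponentIn_eq_image hx] at hd ⊢
  obtain ⟨Z, hZ, hxZ, hKZ⟩ := exists_isClopen_disjoint_of_disjoint_connectedComponent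
    (hK.preimage continuous_subtype_val)
    ((hd.preimage Subtype.val).mono_right (subset_preimage_image _ _))
  refine ⟨(↑) '' Z, Subtype.coe_image_subset _ _,
    hZ.isClosed.isCompact.image continuous_subtype_val, ?_,
    image_mono (hZ.connectedComponent_subset hxZ), ?_⟩
  · rw [← image_val_compl]
    exact hZ.compl.isClosed.isCompact.image continuous_subtype_val
  · rw [disjoint_left]
    rintro _ hyK ⟨z, hz, rfl⟩
    exact hKZ.notMem_of_mem_left hyK hz

theorem IsCompact.exists_isOpen_superset_connectedComponentIn (hF : IsCompact F)
    (hK : IsClosed K) (hx : x ∈ F) (hd : Disjoint K (connectedComponentIn F x)) :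
    ∃ U, IsOpen U ∧ connectedComponentIn F x ⊆ U ∧ closure U ∩ F ⊆ U \ K := by
  obtain ⟨V, -, hV, hFV, hQV, hKV⟩ := hF.exists_relClopen_connectedComponentIn_subset hK hx hd
  obtain ⟨U, U', hU, hU', hVU, hFVU', hUU'⟩ :=
    SeparatedNhds.of_isCompact_isCompact hV hFV disjoint_sdiff_right
  refine ⟨U, hU, hQV.trans hVU, fun z ⟨hzU, hzF⟩ => ?_⟩
  have hzV : z ∈ V := by
    by_contra hzV
    exact (hUU'.closure_left hU').notMem_of_mem_left hzU (hFVU' ⟨hzF, hzV⟩)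
  exact ⟨hVU hzV, fun hzK => hKV.notMem_of_mem_left hzK hzV⟩

theorem IsOpen.connectedComponentIn_closure_not_subset [CompactSpace X] [PreconnectedSpace X]
    {W : Set X} (hW : IsOpen W) (hx : x ∈ W) (hWc : closure W ≠ univ) :
    ¬ connectedComponentIn (closure W) x ⊆ W := by
  intro hCW
  obtain ⟨U, hU, hCU, hUW⟩ :=
    isClosed_closure.isCompact.exists_isOpen_superset_connectedComponentIn (K := frontier W)
    isClosed_frontier (subset_closure hx)
    ((disjoint_iff_inter_eq_empty.mpr hW.inter_frontier_eq).symm.mono_right hCW)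
  have hS : closure U ∩ closure W = U ∩ W := by
    refine (subset_inter (fun z hz => (hUW hz).1) fun z hz => ?_).antisymm
      (inter_subset_inter subset_closure subset_closure)
    by_contra hzW
    exact (hUW hz).2 (hW.frontier_eq ▸ ⟨hz.2, hzW⟩)
  have hclopen : IsClopen (closure U ∩ closure W) :=
    ⟨isClosed_closure.inter isClosed_closure, hS ▸ hU.inter hW⟩
  have hxS : x ∈ closure U ∩ closure W :=
    hS ▸ ⟨hCU (mem_connectedComponentIn (subset_closure hx)), hx⟩
  exact hWc (univ_subset_iff.mp (hclopen.eq_univ ⟨x, hxS⟩ ▸ inter_subset_right))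

end Components

theorem HerIndec.subset_or_subset {Y : Type*} [TopologicalSpace Y] (hY : HerIndec Y)
    {B C : Set Y} (hB : IsCompact B) (hBconn : IsConnected B) (hC : IsCompact C)
    (hCconn : IsConnected C) (hBC : (B ∩ C).Nonempty) : B ⊆ C ∨ C ⊆ B := by
  by_contra! h
  refine hY (B ∪ C) (hB.union hC) (hBconn.union hBC hCconn)
    ⟨B, C, hB, hBconn, hC, hCconn, rfl, ?_, ?_⟩
  · exact fun e => h.2 (subset_union_right.trans e.symm.subset)
  · exact fun e => h.1 (subset_union_left.trans e.symm.subset)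

theorem stmt11_general (X Y : Type*) [MetricSpace X] [CompactSpace X] [ConnectedSpace X]
    [TopologicalSpace Y] [T2Space Y] (hHI : HerIndec Y)
    (f : X → Y) (hf : Continuous f) (hsurj : Function.Surjective f) :
    ∀ A : Set Y, IsCompact A → IsConnected A →
      ∀ x ∈ f ⁻¹' A, f '' connectedComponentIn (f ⁻¹' A) x = A := by
  intro A hA hAconn x hx
  have hF : IsClosed (f ⁻¹' A) := hA.isClosed.preimage hf
  refine (image_subset_iff.mpr (connectedComponentIn_subset _ _)).antisymm fun a haA => ?_
  by_contra haQ
  obtain ⟨p, rfl⟩ := hsurj a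
  obtain ⟨U, hU, hQU, hUF⟩ := hF.isCompact.exists_isOpen_superset_connectedComponentIn
    (isClosed_singleton.preimage hf) hx
    (disjoint_left.mpr fun z hz hzQ => haQ ⟨z, hzQ, hz⟩)
  have hxU : x ∈ U := hQU (mem_connectedComponentIn hx)
  have hpU : p ∉ closure U := fun hp => (hUF ⟨hp, haA⟩).2 rfl
  have hCnotU := hU.connectedComponentIn_closure_not_subset hxU
    ((ne_univ_iff_exists_notMem _).mpr ⟨p, hpU⟩)
  set C := connectedComponentIn (closure U) x
  have hxC : x ∈ C := mem_connectedComponentIn (subset_closure hxU)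
  have hC : IsCompact C := (isClosed_closure.connectedComponentIn x).isCompact
  have hCconn : IsConnected C := isConnected_connectedComponentIn_iff.mpr (subset_closure hxU)
  rcases hHI.subset_or_subset (hC.image hf) (hCconn.image f hf.continuousOn) hA hAconn
    ⟨f x, mem_image_of_mem f hxC, hx⟩ with hCA | hAC
  · exact hCnotU fun z hz =>
      (hUF ⟨connectedComponentIn_subset _ _ hz, hCA (mem_image_of_mem f hz)⟩).1
  · obtain ⟨c, hc, hcp⟩ := hAC haA
    exact (hUF ⟨connectedComponentIn_subset _ _ hc, show f c ∈ A from hcp ▸ haA⟩).2 hcp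

/-- A continuous surjection from a compact metric continuum onto a hereditarily
indecomposable continuum is confluent: the image of each connected component of the
preimage of a subcontinuum is the whole subcontinuum. -/
theorem stmt11 (X Y : Type*) [MetricSpace X] [CompactSpace X] [ConnectedSpace X]
    [Nonempty X] [TopologicalSpace Y] [T2Space Y] [CompactSpace Y]
    [ConnectedSpace Y] [Nonempty Y] (hHI : HerIndec Y)
    (f : X → Y) (hf : Continuous f) (hsurj : Function.Surjective f) :
    ∀ A : Set Y, IsCompact A → IsConnected A →
      ∀ x ∈ f ⁻¹' A, f '' connectedComponentIn (f ⁻¹' A) x = A :=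
  stmt11_general X Y hHI f hf hsurj
end

section
/- If X is a continuum admitting a Whitney map onto an arc (J, ⊲), then every long order arc in C(X) is order-isomorphic to (J, ⊲). -/
noncomputable section

variable (X : Type) [TopologicalSpace X]

/-- The Vietoris topology on the collection of all subsets of `X`, generated by the
sets `{A | A ⊆ U}` and `{A | A ∩ U ≠ ∅}` for `U` open. -/
def vietoris : TopologicalSpace (Set X) :=
  TopologicalSpace.generateFrom
    ({S | ∃ U : Set X, IsOpen U ∧ S = {A : Set X | A ⊆ U}} ∪
      {S | ∃ U : Set X, IsOpen U ∧ S = {A : Set X | (A ∩ U).Nonempty}})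

/-- The hyperspace of subcontinua of `X`. -/
def CX : Type := {A : Set X // IsCompact A ∧ IsConnected A}

/-- The hyperspace carries the (subspace) Vietoris topology. -/
instance : TopologicalSpace (CX X) := TopologicalSpace.induced Subtype.val (vietoris X)

/-- The hyperspace is partially ordered by inclusion. -/
instance : PartialOrder (CX X) :=
  inferInstanceAs (PartialOrder {A : Set X // IsCompact A ∧ IsConnected A})

/-- The singleton `{x}` as a subcontinuum. -/
def sgl (x : X) : CX X := ⟨{x}, isCompact_singleton, isConnected_singleton⟩

/-- The whole space as a subcontinuum. -/
def whole [CompactSpace X] [ConnectedSpace X] [Nonempty X] : CX X :=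
  ⟨Set.univ, isCompact_univ, isConnected_univ⟩

variable [CompactSpace X] [ConnectedSpace X] [Nonempty X]

/-- A long order arc in the hyperspace: a subcontinuum of `C(X)` linearly ordered by
inclusion containing the whole space and some singleton. -/
def IsLongOrderArc (𝒜 : Set (CX X)) : Prop :=
  IsCompact 𝒜 ∧ IsConnected 𝒜 ∧
    (∀ A ∈ 𝒜, ∀ B ∈ 𝒜, A.1 ⊆ B.1 ∨ B.1 ⊆ A.1) ∧
    (∃ x : X, sgl X x ∈ 𝒜) ∧ whole X ∈ 𝒜

theorem IsChain.lt_iff_lt_of_strictMono {α β : Type*} [PartialOrder α] [Preorder β]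
    {s : Set α} (hs : IsChain (· ≤ ·) s) {f : α → β} (hf : StrictMono f)
    {a b : α} (ha : a ∈ s) (hb : b ∈ s) : f a < f b ↔ a < b := by
  refine ⟨fun hlt => ?_, fun hab => hf hab⟩
  by_contra hnot
  exact (hf.monotone ((hs.not_lt ha hb).mp hnot)).not_gt hlt

theorem IsPreconnected.image_eq_univ_of_isBot_of_isTop {α β : Type*} [TopologicalSpace α]
    [LinearOrder β] [TopologicalSpace β] [OrderClosedTopology β] {s : Set α}
    (hs : IsPreconnected s) {f : α → β} (hf : ContinuousOn f s) {a b : β}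
    (ha_bot : IsBot a) (hb_top : IsTop b) (ha : a ∈ f '' s) (hb : b ∈ f '' s) :
    f '' s = Set.univ :=
  Set.eq_univ_of_forall fun j => (hs.image f hf).Icc_subset ha hb ⟨ha_bot j, hb_top j⟩

theorem IsLongOrderArc.isChain {𝒜 : Set (CX X)} (h𝒜 : IsLongOrderArc X 𝒜) :
    IsChain (· ≤ ·) 𝒜 :=
  fun A hA B hB _ => h𝒜.2.2.1 A hA B hB

theorem stmt14
    (J : Type) [LinearOrder J] [TopologicalSpace J] [OrderTopology J]
    (jmin jmax : J) (hjmin : ∀ j : J, jmin ≤ j) (hjmax : ∀ j : J, j ≤ jmax)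
    (μ : CX X → J) (hμcont : Continuous μ)
    (hμsgl : ∀ x : X, μ (sgl X x) = jmin)
    (hμmono : ∀ A B : CX X, A.1 ⊂ B.1 → μ A < μ B)
    (hμtop : μ (whole X) = jmax)
    (𝒜 : Set (CX X)) (h𝒜 : IsLongOrderArc X 𝒜) :
    (∀ A ∈ 𝒜, ∀ B ∈ 𝒜, (A.1 ⊂ B.1 ↔ μ A < μ B)) ∧ μ '' 𝒜 = Set.univ := by
  have hμstrict : StrictMono μ := hμmono
  refine ⟨fun A hA B hB => (h𝒜.isChain.lt_iff_lt_of_strictMono hμstrict hA hB).symm, ?_⟩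
  obtain ⟨-, h𝒜conn, -, ⟨x, hx⟩, hwhole⟩ := h𝒜
  exact h𝒜conn.isPreconnected.image_eq_univ_of_isBot_of_isTop hμcont.continuousOn hjmin hjmax
    ⟨sgl X x, hx, hμsgl x⟩ ⟨whole X, hwhole, hμtop⟩
end
end
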